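/- arXiv:2402.16495 — 4 statements merged into one kernel-verified Lean document; each statement's English description precedes it below -/
import Mathlib

section
/- Let (𝔤, 𝔥, ρ, ψ) be a matched pair of Lie algebras and (V, W, α, β) a representation of it, with V, W representations of both 𝔤 (via ρ_V, ρ_W) and 𝔥 (via ψ_V, ψ_W). Then the quadruple (𝔤 ⋉ V, 𝔥 ⋉ W, ρ ⋉ α, ψ ⋉ β) is a matched pair of Lie algebras, where 𝔤 ⋉ V and 𝔥 ⋉ W are the semidirect product Lie algebras, (ρ ⋉ α)_{(x,v)}(h,w) = (ρ_x h, (ρ_W)_x w + α_v h) and (ψ ⋉ β)_{(h,w)}(x,u) = (ψ_h x, (ψ_V)_h u + β_w x). -/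
/-- A bilinear map given as a plain two-argument function. -/
def Bilin (k : Type*) [Field k] {A B C : Type*} [AddCommGroup A] [Module k A]
    [AddCommGroup B] [Module k B] [AddCommGroup C] [Module k C] (f : A → B → C) : Prop :=
  (∀ a a' b, f (a + a') b = f a b + f a' b) ∧
  (∀ (c : k) (a : A) (b : B), f (c • a) b = c • f a b) ∧
  (∀ a b b', f a (b + b') = f a b + f a b') ∧
  (∀ (c : k) (a : A) (b : B), f a (c • b) = c • f a b)

/-- A Lie algebra structure on `A`, given by a bilinear, alternating bracket
satisfying the Jacobi identity. -/
def IsLieBracketP (k : Type*) [Field k] {A : Type*} [AddCommGroup A] [Module k A]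
    (μ : A → A → A) : Prop :=
  Bilin k μ ∧ (∀ x, μ x x = 0) ∧
  (∀ x y z, μ (μ x y) z + μ (μ y z) x + μ (μ z x) y = 0)

/-- `ρ` is a representation (action map) of the Lie algebra `(A, μ)` on `B`. -/
def IsRepP (k : Type*) [Field k] {A B : Type*} [AddCommGroup A] [Module k A]
    [AddCommGroup B] [Module k B] (μ : A → A → A) (ρ : A → B → B) : Prop :=
  Bilin k ρ ∧ ∀ x y h, ρ (μ x y) h = ρ x (ρ y h) - ρ y (ρ x h)

/-- A matched pair of Lie algebras `(𝔤, 𝔥, ρ, ψ)`. -/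
def IsMatchedPairP (k : Type*) [Field k] {G H : Type*} [AddCommGroup G] [Module k G]
    [AddCommGroup H] [Module k H]
    (μ : G → G → G) (ν : H → H → H) (ρ : G → H → H) (ψ : H → G → G) : Prop :=
  IsLieBracketP k μ ∧ IsLieBracketP k ν ∧ IsRepP k μ ρ ∧ IsRepP k ν ψ ∧
  (∀ x h h', ρ x (ν h h') = ν (ρ x h) h' + ν h (ρ x h') + ρ (ψ h' x) h - ρ (ψ h x) h') ∧
  (∀ h x y, ψ h (μ x y) = μ (ψ h x) y + μ x (ψ h y) + ψ (ρ y h) x - ψ (ρ x h) y)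

/-- The bicrossed product bracket on `G × H` associated with the data `(μ, ν, ρ, ψ)`. -/
def bicross {G H : Type*} [AddCommGroup G] [AddCommGroup H]
    (μ : G → G → G) (ν : H → H → H) (ρ : G → H → H) (ψ : H → G → G) :
    G × H → G × H → G × H :=
  fun a b => (μ a.1 b.1 + ψ a.2 b.1 - ψ b.2 a.1, ν a.2 b.2 + ρ a.1 b.2 - ρ b.1 a.2)

/-- A representation `(V, W, α, β)` of a matched pair of Lie algebras `(𝔤, 𝔥, ρ, ψ)`:
`V, W` are representations of both `𝔤` and `𝔥`, and `α : V × 𝔥 → W`, `β : W × 𝔤 → V`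
are pairing maps satisfying the six compatibility identities. -/
def IsMPRepP (k : Type*) [Field k] {G H V W : Type*} [AddCommGroup G] [Module k G]
    [AddCommGroup H] [Module k H] [AddCommGroup V] [Module k V] [AddCommGroup W] [Module k W]
    (μ : G → G → G) (ν : H → H → H) (ρ : G → H → H) (ψ : H → G → G)
    (ρV : G → V → V) (ψV : H → V → V) (ρW : G → W → W) (ψW : H → W → W)
    (α : V → H → W) (β : W → G → V) : Prop :=
  IsRepP k μ ρV ∧ IsRepP k ν ψV ∧ IsRepP k μ ρW ∧ IsRepP k ν ψW ∧
  Bilin k α ∧ Bilin k β ∧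
  (∀ x v h, α (ρV x v) h = ρW x (α v h) - α v (ρ x h)) ∧
  (∀ h w x, β (ψW h w) x = ψV h (β w x) - β w (ψ h x)) ∧
  (∀ x h w, ρW x (ψW h w) = ψW (ρ x h) w + ψW h (ρW x w) + α (β w x) h - ρW (ψ h x) w) ∧
  (∀ v h h', α v (ν h h') = - ψW h' (α v h) + ψW h (α v h') + α (ψV h' v) h - α (ψV h v) h') ∧
  (∀ h x v, ψV h (ρV x v) = ρV (ψ h x) v + ρV x (ψV h v) + β (α v h) x - ψV (ρ x h) v) ∧
  (∀ w x y, β w (μ x y) = - ρV y (β w x) + ρV x (β w y) + β (ρW y w) x - β (ρW x w) y)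

/-!
Each axiom of the new matched pair splits into a `𝔤`- or `𝔥`-component, which is the same axiom
of `(𝔤, 𝔥, ρ, ψ)`, and a `V`- or `W`-component, which after bilinear expansion is one of the six
identities of `(V, W, α, β)`. Both sets of data are symmetric under exchanging
`(𝔤, V, ρ, α)` with `(𝔥, W, ψ, β)`, so each general statement below is used twice.
-/

namespace Bilin

variable {k : Type*} [Field k] {A B C : Type*} [AddCommGroup A] [Module k A]
  [AddCommGroup B] [Module k B] [AddCommGroup C] [Module k C] {f : A → B → C}

theorem add_left (hf : Bilin k f) (a a' : A) (b : B) : f (a + a') b = f a b + f a' b :=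
  hf.1 a a' b

theorem smul_left (hf : Bilin k f) (c : k) (a : A) (b : B) : f (c • a) b = c • f a b :=
  hf.2.1 c a b

theorem add_right (hf : Bilin k f) (a : A) (b b' : B) : f a (b + b') = f a b + f a b' :=
  hf.2.2.1 a b b'

theorem smul_right (hf : Bilin k f) (c : k) (a : A) (b : B) : f a (c • b) = c • f a b :=
  hf.2.2.2 c a b

theorem sub_left (hf : Bilin k f) (a a' : A) (b : B) : f (a - a') b = f a b - f a' b := by
  have hneg : f (-a') b = -f a' b := by simpa using hf.smul_left (-1) a' b
  rw [sub_eq_add_neg, hf.add_left, hneg, sub_eq_add_neg]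

theorem sub_right (hf : Bilin k f) (a : A) (b b' : B) : f a (b - b') = f a b - f a b' := by
  have hneg : f a (-b') = -f a b' := by simpa using hf.smul_right (-1) a b'
  rw [sub_eq_add_neg, hf.add_right, hneg, sub_eq_add_neg]

end Bilin

section Semidirect

variable {k : Type*} [Field k] {A B C D : Type*} [AddCommGroup A] [Module k A]
  [AddCommGroup B] [Module k B] [AddCommGroup C] [Module k C] [AddCommGroup D] [Module k D]

def semidirectBracket (μ : A → A → A) (ρ : A → B → B) : A × B → A × B → A × B :=
  fun a b => (μ a.1 b.1, ρ a.1 b.2 - ρ b.1 a.2)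

/-- The paper's `ρ ⋉ α`. -/
def semidirectAction (ρ : A → C → C) (ρD : A → D → D) (α : B → C → D) :
    A × B → C × D → C × D :=
  fun a c => (ρ a.1 c.1, ρD a.1 c.2 + α a.2 c.1)

theorem IsLieBracketP.semidirect {μ : A → A → A} {ρ : A → B → B}
    (hμ : IsLieBracketP k μ) (hρ : IsRepP k μ ρ) :
    IsLieBracketP k (semidirectBracket μ ρ) := by
  obtain ⟨hμ, hμ_self, hμ_jacobi⟩ := hμ
  obtain ⟨hρ, hρ_bracket⟩ := hρ
  refine ⟨⟨?_, ?_, ?_, ?_⟩, ?_, ?_⟩ <;> intros <;> ext <;>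
    simp only [semidirectBracket, Prod.fst_add, Prod.snd_add, Prod.smul_fst, Prod.smul_snd,
      Prod.fst_zero, Prod.snd_zero, smul_sub, hμ.add_left, hμ.add_right, hμ.smul_left,
      hμ.smul_right, hρ.add_left, hρ.add_right, hρ.smul_left, hρ.smul_right, hρ.sub_right,
      hρ_bracket, hμ_self, hμ_jacobi, sub_self] <;>
    abel

theorem IsRepP.semidirect {μ : A → A → A} {ρ : A → C → C} {ρB : A → B → B}
    {ρD : A → D → D} {α : B → C → D}
    (hρ : IsRepP k μ ρ) (hρD : IsRepP k μ ρD) (hα : Bilin k α)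
    (hα_equivariant : ∀ x v h, α (ρB x v) h = ρD x (α v h) - α v (ρ x h)) :
    IsRepP k (semidirectBracket μ ρB) (semidirectAction ρ ρD α) := by
  obtain ⟨hρ, hρ_bracket⟩ := hρ
  obtain ⟨hρD, hρD_bracket⟩ := hρD
  refine ⟨⟨?_, ?_, ?_, ?_⟩, ?_⟩ <;> intros <;> ext <;>
    simp only [semidirectBracket, semidirectAction, Prod.fst_add, Prod.snd_add, Prod.fst_sub,
      Prod.snd_sub, Prod.smul_fst, Prod.smul_snd, smul_add, hρ.add_left, hρ.add_right,
      hρ.smul_left, hρ.smul_right, hρD.add_left, hρD.add_right, hρD.smul_left, hρD.smul_right,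
      hα.add_left, hα.add_right,
      hα.smul_left, hα.smul_right, hα.sub_left, hρ_bracket, hρD_bracket, hα_equivariant] <;>
    abel

end Semidirect

section Compat

variable {k : Type*} [Field k] {G H V W : Type*} [AddCommGroup G] [Module k G]
  [AddCommGroup H] [Module k H] [AddCommGroup V] [Module k V] [AddCommGroup W] [Module k W]

/-- Exchanging the roles of `(𝔤, V, ρ, α)` and `(𝔥, W, ψ, β)` turns this into the second
compatibility condition of the matched pair. -/
theorem semidirectAction_compat {ν : H → H → H} {ρ : G → H → H} {ψ : H → G → G}
    {ψV : H → V → V} {ρW : G → W → W} {ψW : H → W → W} {α : V → H → W} {β : W → G → V}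
    (hc : ∀ x h h', ρ x (ν h h') = ν (ρ x h) h' + ν h (ρ x h') + ρ (ψ h' x) h - ρ (ψ h x) h')
    (hρW : Bilin k ρW) (hψW : Bilin k ψW) (hα : Bilin k α)
    (hρψW : ∀ x h w,
      ρW x (ψW h w) = ψW (ρ x h) w + ψW h (ρW x w) + α (β w x) h - ρW (ψ h x) w)
    (hαν : ∀ v h h',
      α v (ν h h') = - ψW h' (α v h) + ψW h (α v h') + α (ψV h' v) h - α (ψV h v) h') :
    ∀ a b b', semidirectAction ρ ρW α a (semidirectBracket ν ψW b b') =
      semidirectBracket ν ψW (semidirectAction ρ ρW α a b) b' +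
        semidirectBracket ν ψW b (semidirectAction ρ ρW α a b') +
        semidirectAction ρ ρW α (semidirectAction ψ ψV β b' a) b -
        semidirectAction ρ ρW α (semidirectAction ψ ψV β b a) b' := by
  intro a b b'
  ext
  · exact hc _ _ _
  · simp only [semidirectBracket, semidirectAction, Prod.snd_add, Prod.snd_sub, hρW.sub_right,
      hψW.add_right, hα.add_left, hρψW, hαν]
    abel

end Compat

theorem semidirect_product_matched_pair_general
    (k : Type*) [Field k] {G H V W : Type*}
    [AddCommGroup G] [Module k G] [AddCommGroup H] [Module k H]
    [AddCommGroup V] [Module k V] [AddCommGroup W] [Module k W]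
    (μ : G → G → G) (ν : H → H → H) (ρ : G → H → H) (ψ : H → G → G)
    (ρV : G → V → V) (ψV : H → V → V) (ρW : G → W → W) (ψW : H → W → W)
    (α : V → H → W) (β : W → G → V)
    (hmp : IsMatchedPairP k μ ν ρ ψ)
    (hrep : IsMPRepP k μ ν ρ ψ ρV ψV ρW ψW α β) :
    IsMatchedPairP k
      (fun (a b : G × V) => (μ a.1 b.1, ρV a.1 b.2 - ρV b.1 a.2))
      (fun (a b : H × W) => (ν a.1 b.1, ψW a.1 b.2 - ψW b.1 a.2))
      (fun (a : G × V) (b : H × W) => (ρ a.1 b.1, ρW a.1 b.2 + α a.2 b.1))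
      (fun (a : H × W) (b : G × V) => (ψ a.1 b.1, ψV a.1 b.2 + β a.2 b.1)) := by
  obtain ⟨hμ, hν, hρ, hψ, hc₁, hc₂⟩ := hmp
  obtain ⟨hρV, hψV, hρW, hψW, hα, hβ, hαρ, hβψ, hρψW, hαν, hψρV, hβμ⟩ := hrep
  exact ⟨hμ.semidirect hρV, hν.semidirect hψW, hρ.semidirect hρW hα hαρ,
    hψ.semidirect hψV hβ hβψ, semidirectAction_compat hc₁ hρW.1 hψW.1 hα hρψW hαν,
    semidirectAction_compat hc₂ hψV.1 hρV.1 hβ hψρV hβμ⟩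

/-- Semidirect product. If `(V, W, α, β)` is a representation of a matched
pair of Lie algebras `(𝔤, 𝔥, ρ, ψ)`, then `(𝔤 ⋉ V, 𝔥 ⋉ W, ρ ⋉ α, ψ ⋉ β)` is again a
matched pair of Lie algebras. -/
theorem semidirect_product_matched_pair
    (k : Type*) [Field k] [CharZero k] {G H V W : Type*}
    [AddCommGroup G] [Module k G] [AddCommGroup H] [Module k H]
    [AddCommGroup V] [Module k V] [AddCommGroup W] [Module k W]
    (μ : G → G → G) (ν : H → H → H) (ρ : G → H → H) (ψ : H → G → G)
    (ρV : G → V → V) (ψV : H → V → V) (ρW : G → W → W) (ψW : H → W → W)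
    (α : V → H → W) (β : W → G → V)
    (hmp : IsMatchedPairP k μ ν ρ ψ)
    (hrep : IsMPRepP k μ ν ρ ψ ρV ψV ρW ψW α β) :
    IsMatchedPairP k
      (fun (a b : G × V) => (μ a.1 b.1, ρV a.1 b.2 - ρV b.1 a.2))
      (fun (a b : H × W) => (ν a.1 b.1, ψW a.1 b.2 - ψW b.1 a.2))
      (fun (a : G × V) (b : H × W) => (ρ a.1 b.1, ρW a.1 b.2 + α a.2 b.1))
      (fun (a : H × W) (b : G × V) => (ψ a.1 b.1, ψV a.1 b.2 + β a.2 b.1)) :=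
  semidirect_product_matched_pair_general k μ ν ρ ψ ρV ψV ρW ψW α β hmp hrep
end

section
/- Let (𝔤, 𝔥, ρ, ψ) be a matched pair of Lie algebras. Then (𝔥*, 𝔤*, α, β) is a representation of (𝔤, 𝔥, ρ, ψ) (the coadjoint representation), where (α_p h)(x) = −p(ρ_x h) and (β_q x)(h) = −q(ψ_h x), and 𝔤 acts on 𝔥* and 𝔤* by the duals of ρ and ad_𝔤 respectively, while 𝔥 acts on 𝔥* and 𝔤* by the duals of ad_𝔥 and ψ. -/
/-!
Every identity required of the coadjoint data is the transpose of an identity in `𝔤` or `𝔥`: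
evaluated at a vector, it becomes the representation property of `ρ`, `ψ` or of an adjoint
action, or one of the two compatibility conditions of the matched pair (in two cases combined
with antisymmetry of the bracket). The axioms of a matched pair are invariant under exchanging
`(𝔤, ρ)` with `(𝔥, ψ)`, and this exchange permutes the six pairing conditions in pairs, so
three of them need a proof.
-/

open Module

section Bilinear

variable {k : Type*} [Field k] {A B C : Type*} [AddCommGroup A] [Module k A]
  [AddCommGroup B] [Module k B] [AddCommGroup C] [Module k C]

theorem Bilin.swap {f : A → B → C} (hf : Bilin k f) : Bilin k (fun b a => f a b) :=
  ⟨fun b b' a => hf.2.2.1 a b b', fun c b a => hf.2.2.2 c a b, fun b a a' => hf.1 a a' b,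
    fun c b a => hf.2.1 c a b⟩

theorem Bilin.map_neg_left {f : A → B → C} (hf : Bilin k f) (a : A) (b : B) :
    f (-a) b = -f a b := by
  simpa using hf.2.1 (-1 : k) a b

/-- In the paper's notation `dualAct ρ x = ρ*_x` and `α_p h = dualAct ρ.flip h p`. -/
def dualAct (f : A →ₗ[k] B →ₗ[k] C) (a : A) (q : Dual k C) : Dual k B :=
  -((f a).dualMap q)

@[simp]
theorem dualAct_apply (f : A →ₗ[k] B →ₗ[k] C) (a : A) (q : Dual k C) (b : B) :
    dualAct f a q b = -q (f a b) :=
  rfl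

theorem bilin_dualAct (f : A →ₗ[k] B →ₗ[k] C) : Bilin k (dualAct f) := by
  refine ⟨?_, ?_, ?_, ?_⟩ <;> intros <;> ext <;> simp <;> ring

end Bilinear

section Representation

variable {k : Type*} [Field k] {A B : Type*} [AddCommGroup A] [Module k A]
  [AddCommGroup B] [Module k B] {μ : A → A → A}

theorem IsLieBracketP.antisymm (hμ : IsLieBracketP k μ) (x y : A) : μ x y = -μ y x := by
  have h := hμ.2.1 (x + y)
  rw [hμ.1.1, hμ.1.2.2.1, hμ.1.2.2.1, hμ.2.1 x, hμ.2.1 y, zero_add, add_zero] at h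
  exact eq_neg_of_add_eq_zero_left h

theorem IsLieBracketP.isRepP_ad (hμ : IsLieBracketP k μ) : IsRepP k μ μ := by
  refine ⟨hμ.1, fun x y z => ?_⟩
  have jacobi := hμ.2.2 x y z
  rw [hμ.antisymm (μ y z), hμ.antisymm z x, hμ.1.map_neg_left, hμ.antisymm (μ x z)] at jacobi
  rw [← sub_eq_zero, ← jacobi]
  abel

theorem IsRepP.dualAct {f : A →ₗ[k] B →ₗ[k] B} (hf : IsRepP k μ (fun a b => f a b)) :
    IsRepP k μ (dualAct f) := by
  refine ⟨bilin_dualAct f, fun x y q => ?_⟩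
  ext b
  simp [hf.2]

end Representation

theorem IsMatchedPairP.symm {k : Type*} [Field k] {G H : Type*} [AddCommGroup G] [Module k G]
    [AddCommGroup H] [Module k H] {μ : G → G → G} {ν : H → H → H} {ρ : G → H → H}
    {ψ : H → G → G} (hmp : IsMatchedPairP k μ ν ρ ψ) : IsMatchedPairP k ν μ ψ ρ :=
  let ⟨hG, hH, hρ, hψ, hρν, hψμ⟩ := hmp
  ⟨hH, hG, hψ, hρ, hψμ, hρν⟩

section Coadjoint

variable {k : Type*} [Field k] {G H : Type*} [AddCommGroup G] [Module k G]
  [AddCommGroup H] [Module k H] {μ : G →ₗ[k] G →ₗ[k] G} {ν : H →ₗ[k] H →ₗ[k] H}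
  {ρ : G →ₗ[k] H →ₗ[k] H} {ψ : H →ₗ[k] G →ₗ[k] G}

theorem dualAct_flip_dualAct (hρ : IsRepP k (fun x y => μ x y) (fun x h => ρ x h))
    (x : G) (p : Dual k H) (h : H) :
    dualAct ρ.flip h (dualAct ρ x p) =
      dualAct μ x (dualAct ρ.flip h p) - dualAct ρ.flip (ρ x h) p := by
  ext y
  simp [hρ.2]

theorem dualAct_dualAct_of_isMatchedPairP
    (hmp : IsMatchedPairP k (fun x y => μ x y) (fun h h' => ν h h')
      (fun x h => ρ x h) (fun h x => ψ h x)) (x : G) (h : H) (q : Dual k G) :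
    dualAct μ x (dualAct ψ h q) =
      dualAct ψ (ρ x h) q + dualAct ψ h (dualAct μ x q) + dualAct ρ.flip h (dualAct ψ.flip x q) -
        dualAct μ (ψ h x) q := by
  ext y
  simp [hmp.2.2.2.2.2 h x y]
  ring

theorem dualAct_flip_bracket_of_isMatchedPairP
    (hmp : IsMatchedPairP k (fun x y => μ x y) (fun h h' => ν h h')
      (fun x h => ρ x h) (fun h x => ψ h x)) (p : Dual k H) (h h' : H) :
    dualAct ρ.flip (ν h h') p =
      -dualAct ψ h' (dualAct ρ.flip h p) + dualAct ψ h (dualAct ρ.flip h' p) +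
        dualAct ρ.flip h (dualAct ν h' p) - dualAct ρ.flip h' (dualAct ν h p) := by
  ext y
  simp [hmp.2.2.2.2.1 y h h', hmp.2.1.antisymm (ρ y h) h']
  ring

end Coadjoint

theorem coadjoint_representation_of_matched_pair_general
    (k : Type*) [Field k] {G H : Type*}
    [AddCommGroup G] [Module k G] [AddCommGroup H] [Module k H]
    (μ : G →ₗ[k] G →ₗ[k] G) (ν : H →ₗ[k] H →ₗ[k] H)
    (ρ : G →ₗ[k] H →ₗ[k] H) (ψ : H →ₗ[k] G →ₗ[k] G)
    (hmp : IsMatchedPairP k (fun x y => μ x y) (fun h h' => ν h h')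
      (fun x h => ρ x h) (fun h x => ψ h x)) :
    IsMPRepP k (fun x y => μ x y) (fun h h' => ν h h')
      (fun x h => ρ x h) (fun h x => ψ h x)
      -- 𝔤 acts on 𝔥* by the dual of ρ
      (fun (x : G) (q : Dual k H) => -((ρ x).dualMap q))
      -- 𝔥 acts on 𝔥* by the dual of ad_𝔥
      (fun (h : H) (q : Dual k H) => -((ν h).dualMap q))
      -- 𝔤 acts on 𝔤* by the dual of ad_𝔤
      (fun (x : G) (q : Dual k G) => -((μ x).dualMap q))
      -- 𝔥 acts on 𝔤* by the dual of ψ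
      (fun (h : H) (q : Dual k G) => -((ψ h).dualMap q))
      -- pairing maps
      (fun (p : Dual k H) (h : H) => -((ρ.flip h).dualMap p))
      (fun (q : Dual k G) (x : G) => -((ψ.flip x).dualMap q)) := by
  have ⟨hG, hH, hρ, hψ, _, _⟩ := hmp
  exact ⟨hρ.dualAct, hH.isRepP_ad.dualAct, hG.isRepP_ad.dualAct, hψ.dualAct,
    (bilin_dualAct ρ.flip).swap, (bilin_dualAct ψ.flip).swap,
    dualAct_flip_dualAct hρ, dualAct_flip_dualAct hψ,
    dualAct_dualAct_of_isMatchedPairP hmp, dualAct_flip_bracket_of_isMatchedPairP hmp,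
    dualAct_dualAct_of_isMatchedPairP hmp.symm, dualAct_flip_bracket_of_isMatchedPairP hmp.symm⟩

/-- Coadjoint representation. For a matched pair of Lie algebras
`(𝔤, 𝔥, ρ, ψ)`, the quadruple `(𝔥*, 𝔤*, α, β)` with `(α_p h)(x) = −p(ρ_x h)`,
`(β_q x)(h) = −q(ψ_h x)` and the dual actions (of `ρ`, `ad_𝔤`, `ad_𝔥`, `ψ`) is a
representation of `(𝔤, 𝔥, ρ, ψ)`. -/
theorem coadjoint_representation_of_matched_pair
    (k : Type*) [Field k] [CharZero k] {G H : Type*}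
    [AddCommGroup G] [Module k G] [AddCommGroup H] [Module k H]
    (μ : G →ₗ[k] G →ₗ[k] G) (ν : H →ₗ[k] H →ₗ[k] H)
    (ρ : G →ₗ[k] H →ₗ[k] H) (ψ : H →ₗ[k] G →ₗ[k] G)
    (hmp : IsMatchedPairP k (fun x y => μ x y) (fun h h' => ν h h')
      (fun x h => ρ x h) (fun h x => ψ h x)) :
    IsMPRepP k (fun x y => μ x y) (fun h h' => ν h h')
      (fun x h => ρ x h) (fun h x => ψ h x)
      -- 𝔤 acts on 𝔥* by the dual of ρ
      (fun (x : G) (q : Dual k H) => -((ρ x).dualMap q))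
      -- 𝔥 acts on 𝔥* by the dual of ad_𝔥
      (fun (h : H) (q : Dual k H) => -((ν h).dualMap q))
      -- 𝔤 acts on 𝔤* by the dual of ad_𝔤
      (fun (x : G) (q : Dual k G) => -((μ x).dualMap q))
      -- 𝔥 acts on 𝔤* by the dual of ψ
      (fun (h : H) (q : Dual k G) => -((ψ h).dualMap q))
      -- pairing maps
      (fun (p : Dual k H) (h : H) => -((ρ.flip h).dualMap p))
      (fun (q : Dual k G) (x : G) => -((ψ.flip x).dualMap q)) :=
  coadjoint_representation_of_matched_pair_general k μ ν ρ ψ hmp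
end

section
/- Let 𝔤, 𝔥 be vector spaces with skew-symmetric bilinear maps μ: 𝔤 × 𝔤 → 𝔤, ν: 𝔥 × 𝔥 → 𝔥 and bilinear maps ρ: 𝔤 × 𝔥 → 𝔥, ψ: 𝔥 × 𝔤 → 𝔤. Define μ ⋉ ρ, ψ ⋊ ν ∈ Hom(Λ²(𝔤 ⊕ 𝔥), 𝔤 ⊕ 𝔥) by (μ ⋉ ρ)((x,h),(y,k)) = (μ(x,y), ρ_x k − ρ_y h) and (ψ ⋊ ν)((x,h),(y,k)) = (ψ_h y − ψ_k x, ν(h,k)). Then ((𝔤, μ), (𝔥, ν), ρ, ψ) is a matched pair of Lie algebras if and only if π = (μ ⋉ ρ) + (ψ ⋊ ν) satisfies [π, π]_NR = 0, i.e. π is a Maurer-Cartan element of the graded Lie algebra (⊕_{n≥0} M^n, [·,·]_NR). -/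
noncomputable def insNR {G : Type*} [AddCommGroup G]
    (m n : ℕ) (f : (Fin (m+1) → G) → G) (g : (Fin (n+1) → G) → G) :
    (Fin (m+n+1) → G) → G :=
  fun x => ∑ σ : Equiv.Perm (Fin (m+n+1)),
    if (∀ i j : Fin (m+n+1), i < j → ((j : ℕ) < m+1 ∨ m+1 ≤ (i : ℕ)) → σ i < σ j) then
      ((Equiv.Perm.sign σ : ℤ)) •
        g (Fin.cons (f (fun i => x (σ ⟨i, by omega⟩)))
            (fun i : Fin n => x (σ ⟨m+1+(i:ℕ), by omega⟩)))
    else 0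

noncomputable def nrB {G : Type*} [AddCommGroup G]
    (m n : ℕ) (f : (Fin (m+1) → G) → G) (g : (Fin (n+1) → G) → G) :
    (Fin (m+n+1) → G) → G :=
  fun x => insNR m n f g x - ((-1 : ℤ)^(m*n)) • insNR n m g f (fun i => x ⟨i, by omega⟩)

def IsMultAlt (k : Type*) [Field k] {G : Type*} [AddCommGroup G] [Module k G]
    (n : ℕ) (f : (Fin n → G) → G) : Prop :=
  (∀ (x : Fin n → G) (i : Fin n) (a b : G),
      f (Function.update x i (a + b)) = f (Function.update x i a) + f (Function.update x i b)) ∧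
  (∀ (x : Fin n → G) (i : Fin n) (c : k) (a : G),
      f (Function.update x i (c • a)) = c • f (Function.update x i a)) ∧
  (∀ (x : Fin n → G) (i j : Fin n), i ≠ j → x i = x j → f x = 0)

def mcElt {G H : Type*} [AddCommGroup G] [AddCommGroup H]
    (μ : G → G → G) (ν : H → H → H) (ρ : G → H → H) (ψ : H → G → G) :
    (Fin 2 → G × H) → G × H :=
  fun x => bicross μ ν ρ ψ (x 0) (x 1)

/-! The insertion `i_π π` is the Jacobiator of the bracket `π` written over the
`(2,1)`-unshuffles, and `[π, π]_NR = 2 i_π π`; so in characteristic zero `π` is a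
Maurer-Cartan element iff the bicrossed bracket on `𝔤 ⊕ 𝔥` satisfies the Jacobi identity.
Sorting the terms of the `𝔤`-component of its Jacobiator by how many arguments come from `𝔥`
splits it into the Jacobiator of `μ`, the representation defects of `ψ` and the compatibility
defects, and each of these is isolated by setting the other components to zero. The
`𝔥`-component is the same computation with `𝔤` and `𝔥` exchanged. -/

namespace Bilin

variable {k : Type*} [Field k] {A B C : Type*} [AddCommGroup A] [Module k A]
  [AddCommGroup B] [Module k B] [AddCommGroup C] [Module k C] {f : A → B → C}

theorem map_add_left (h : Bilin k f) (a a' : A) (b : B) : f (a + a') b = f a b + f a' b :=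
  h.1 a a' b

theorem map_add_right (h : Bilin k f) (a : A) (b b' : B) : f a (b + b') = f a b + f a b' :=
  h.2.2.1 a b b'

theorem map_zero_left (h : Bilin k f) (b : B) : f 0 b = 0 :=
  (AddMonoidHom.mk' (f · b) fun a a' => h.map_add_left a a' b).map_zero

theorem map_zero_right (h : Bilin k f) (a : A) : f a 0 = 0 :=
  (AddMonoidHom.mk' (f a) (h.map_add_right a)).map_zero

theorem map_neg_left_s11 (h : Bilin k f) (a : A) (b : B) : f (-a) b = -f a b :=
  (AddMonoidHom.mk' (f · b) fun a a' => h.map_add_left a a' b).map_neg a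

theorem map_sub_left (h : Bilin k f) (a a' : A) (b : B) : f (a - a') b = f a b - f a' b :=
  (AddMonoidHom.mk' (f · b) fun a a' => h.map_add_left a a' b).map_sub a a'

theorem map_sub_right (h : Bilin k f) (a : A) (b b' : B) : f a (b - b') = f a b - f a b' :=
  (AddMonoidHom.mk' (f a) (h.map_add_right a)).map_sub b b'

theorem map_swap_of_alternating {f : A → A → A} (h : Bilin k f) (halt : ∀ a, f a a = 0)
    (a b : A) : f a b = -f b a := by
  have h0 := halt (a + b)
  rw [h.map_add_left, h.map_add_right, h.map_add_right, halt, halt, zero_add, add_zero] at h0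
  exact eq_neg_of_add_eq_zero_left h0

end Bilin

def jacobiator {A : Type*} [AddCommGroup A] (f : A → A → A) (a b c : A) : A :=
  f (f a b) c - f (f a c) b + f (f b c) a

theorem insNR_one_one_eq_jacobiator {A : Type*} [AddCommGroup A] (f : A → A → A)
    (x : Fin 3 → A) :
    insNR 1 1 (fun y => f (y 0) (y 1)) (fun y => f (y 0) (y 1)) x
      = jacobiator f (x 0) (x 1) (x 2) := by
  have unshuffles : (Finset.univ.filter fun σ : Equiv.Perm (Fin 3) =>
      ∀ i j : Fin 3, i < j → ((j : ℕ) < 1 + 1 ∨ 1 + 1 ≤ (i : ℕ)) → σ i < σ j)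
      = {1, Equiv.swap 1 2, finRotate 3} := by decide
  rw [insNR, ← Finset.sum_filter, unshuffles, Finset.sum_insert (by decide),
    Finset.sum_insert (by decide), Finset.sum_singleton]
  simp [jacobiator, Equiv.swap_apply_of_ne_of_ne]
  abel

theorem nrB_one_one_eq_two_nsmul_jacobiator {A : Type*} [AddCommGroup A] (f : A → A → A)
    (x : Fin 3 → A) :
    nrB 1 1 (fun y => f (y 0) (y 1)) (fun y => f (y 0) (y 1)) x
      = 2 • jacobiator f (x 0) (x 1) (x 2) := by
  simp [nrB, insNR_one_one_eq_jacobiator, two_nsmul]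

theorem forall_nrB_one_one_eq_zero_iff {A : Type*} [AddCommGroup A] [IsAddTorsionFree A]
    (f : A → A → A) :
    (∀ x : Fin 3 → A, nrB 1 1 (fun y => f (y 0) (y 1)) (fun y => f (y 0) (y 1)) x = 0) ↔
      ∀ a b c, jacobiator f a b c = 0 := by
  simp only [nrB_one_one_eq_two_nsmul_jacobiator, two_nsmul_eq_zero]
  refine ⟨fun h a b c => by simpa using h ![a, b, c], fun h x => h _ _ _⟩

section Bicross

variable {k : Type*} [Field k] {G H : Type*} [AddCommGroup G] [Module k G]
  [AddCommGroup H] [Module k H]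

def repDefect (ν : H → H → H) (ψ : H → G → G) (h h' : H) (x : G) : G :=
  ψ (ν h h') x - (ψ h (ψ h' x) - ψ h' (ψ h x))

def compatDefect (μ : G → G → G) (ρ : G → H → H) (ψ : H → G → G) (h : H) (x y : G) :
    G :=
  μ (ψ h x) y + μ x (ψ h y) + ψ (ρ y h) x - ψ (ρ x h) y - ψ h (μ x y)

variable {μ : G → G → G} {ν : H → H → H} {ρ : G → H → H} {ψ : H → G → G}

theorem jacobiator_eq_cyclic_sum (hμ : Bilin k μ) (hμalt : ∀ x, μ x x = 0) (x y z : G) :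
    jacobiator μ x y z = μ (μ x y) z + μ (μ y z) x + μ (μ z x) y := by
  rw [jacobiator, hμ.map_swap_of_alternating hμalt z x, hμ.map_neg_left_s11]
  abel

theorem fst_jacobiator_bicross (hμ : Bilin k μ) (hψ : Bilin k ψ) (hμalt : ∀ x, μ x x = 0)
    (x y z : G) (h h' h'' : H) :
    (jacobiator (bicross μ ν ρ ψ) (x, h) (y, h') (z, h'')).1 =
      jacobiator μ x y z + repDefect ν ψ h h' z - repDefect ν ψ h h'' y
        + repDefect ν ψ h' h'' x + compatDefect μ ρ ψ h y z - compatDefect μ ρ ψ h' x z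
        + compatDefect μ ρ ψ h'' x y := by
  simp only [jacobiator, bicross, repDefect, compatDefect, Prod.fst_sub, Prod.fst_add,
    hμ.map_add_left, hμ.map_sub_left, hψ.map_add_left, hψ.map_sub_left, hψ.map_add_right,
    hψ.map_sub_right, hμ.map_swap_of_alternating hμalt (ψ _ _)]
  abel

theorem forall_fst_jacobiator_bicross_eq_zero_iff (hμ : Bilin k μ) (hν : Bilin k ν)
    (hρ : Bilin k ρ) (hψ : Bilin k ψ) (hμalt : ∀ x, μ x x = 0) :
    (∀ a b c : G × H, (jacobiator (bicross μ ν ρ ψ) a b c).1 = 0) ↔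
      IsLieBracketP k μ ∧ IsRepP k ν ψ ∧
        ∀ h x y,
          ψ h (μ x y) = μ (ψ h x) y + μ x (ψ h y) + ψ (ρ y h) x - ψ (ρ x h) y := by
  have lie_iff : IsLieBracketP k μ ↔ ∀ x y z, jacobiator μ x y z = 0 := by
    simp only [IsLieBracketP, jacobiator_eq_cyclic_sum hμ hμalt, hμ, hμalt, true_and,
      implies_true]
  have rep_iff : IsRepP k ν ψ ↔ ∀ h h' x, repDefect ν ψ h h' x = 0 := by
    simp only [IsRepP, repDefect, sub_eq_zero, hψ, true_and]
  have compat_iff : (∀ h x y,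
        ψ h (μ x y) = μ (ψ h x) y + μ x (ψ h y) + ψ (ρ y h) x - ψ (ρ x h) y) ↔
      ∀ h x y, compatDefect μ ρ ψ h x y = 0 := by
    simp only [compatDefect, sub_eq_zero, eq_comm]
  rw [lie_iff, rep_iff, compat_iff]
  constructor
  · intro hJ
    have vanish := fun x y z h h' h'' =>
      (fst_jacobiator_bicross hμ hψ hμalt x y z h h' h'').symm.trans
        (hJ (x, h) (y, h') (z, h''))
    refine ⟨fun x y z => ?_, fun h h' z => ?_, fun h y z => ?_⟩ <;>
      [have := vanish x y z 0 0 0; have := vanish 0 0 z h h' 0; have := vanish 0 y z h 0 0] <;>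
      simpa [jacobiator, repDefect, compatDefect, hμ.map_zero_left, hμ.map_zero_right,
        hν.map_zero_left, hν.map_zero_right, hρ.map_zero_left, hρ.map_zero_right,
        hψ.map_zero_left, hψ.map_zero_right] using this
  · rintro ⟨hjac, hrep, hcompat⟩ ⟨x, h⟩ ⟨y, h'⟩ ⟨z, h''⟩
    simp [fst_jacobiator_bicross hμ hψ hμalt, hjac, hrep, hcompat]

theorem snd_jacobiator_bicross (a b c : G × H) :
    (jacobiator (bicross μ ν ρ ψ) a b c).2 =
      (jacobiator (bicross ν μ ψ ρ) a.swap b.swap c.swap).1 :=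
  rfl

theorem forall_jacobiator_bicross_eq_zero_iff (hμ : Bilin k μ) (hν : Bilin k ν)
    (hρ : Bilin k ρ) (hψ : Bilin k ψ) (hμalt : ∀ x, μ x x = 0)
    (hνalt : ∀ h, ν h h = 0) :
    (∀ a b c, jacobiator (bicross μ ν ρ ψ) a b c = 0) ↔ IsMatchedPairP k μ ν ρ ψ := by
  have snd_iff : (∀ a b c : G × H, (jacobiator (bicross μ ν ρ ψ) a b c).2 = 0) ↔
      ∀ a b c : H × G, (jacobiator (bicross ν μ ψ ρ) a b c).1 = 0 := by
    simp only [snd_jacobiator_bicross]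
    exact ⟨fun h a b c => by simpa using h a.swap b.swap c.swap, fun h a b c => h _ _ _⟩
  simp only [Prod.ext_iff, Prod.fst_zero, Prod.snd_zero, forall_and]
  rw [forall_fst_jacobiator_bicross_eq_zero_iff hμ hν hρ hψ hμalt, snd_iff,
    forall_fst_jacobiator_bicross_eq_zero_iff hν hμ hψ hρ hνalt, IsMatchedPairP]
  tauto

end Bicross

/-- Maurer-Cartan characterization. Given skew-symmetric bilinear
`μ, ν` and bilinear `ρ, ψ`, the quadruple `((𝔤,μ), (𝔥,ν), ρ, ψ)` is a matched pair of Lie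
algebras iff `π = (μ ⋉ ρ) + (ψ ⋊ ν)` satisfies `[π,π]_NR = 0`, i.e. `π` is a Maurer-Cartan
element of the graded Lie algebra `(⊕_{n≥0} M^n, [·,·]_NR)`. -/
theorem matched_pair_iff_maurer_cartan
    (k : Type*) [Field k] [CharZero k] {G H : Type*}
    [AddCommGroup G] [Module k G] [AddCommGroup H] [Module k H]
    (μ : G → G → G) (ν : H → H → H) (ρ : G → H → H) (ψ : H → G → G)
    (hμbil : Bilin k μ) (hνbil : Bilin k ν) (hρbil : Bilin k ρ) (hψbil : Bilin k ψ)
    (hμalt : ∀ x, μ x x = 0) (hνalt : ∀ h, ν h h = 0) :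
    IsMatchedPairP k μ ν ρ ψ ↔
      ∀ x : Fin 3 → G × H, nrB 1 1 (mcElt μ ν ρ ψ) (mcElt μ ν ρ ψ) x = 0 := by
  have := IsAddTorsionFree.of_isTorsionFree k (G × H)
  rw [← forall_jacobiator_bicross_eq_zero_iff hμbil hνbil hρbil hψbil hμalt hνalt]
  exact (forall_nrB_one_one_eq_zero_iff (bicross μ ν ρ ψ)).symm
end

section
/- Let (𝔤, 𝔥, ρ, ψ) be a matched pair of Lie algebras. The inclusion maps Φ_n: C^n(𝔤, 𝔥, ρ, ψ) → Hom(Λ^n(𝔤 ⊕ 𝔥), 𝔤 ⊕ 𝔥), (F_1,…,F_n) ↦ (0, F_1,…,F_n, 0), form a morphism of cochain complexes from the matched-pair cochain complex (with differential δ_MPL(F) = −[π, F]_NR) to the Chevalley-Eilenberg cochain complex of the bicrossed product Lie algebra 𝔤 ⋈ 𝔥 with coefficients in its adjoint representation. Hence there is an induced morphism H^•_MPL(𝔤, 𝔥, ρ, ψ) → H^•_CE(𝔤 ⋈ 𝔥; 𝔤 ⋈ 𝔥). -/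
/-- `F` belongs to `M^{n−1} = C^{n−1|0} ⊕ ⋯ ⊕ C^{0|n−1}`: all bidegree components of `F`
have nonnegative bidegrees, i.e. `F` maps all-`𝔤` tuples into `𝔤` and all-`𝔥` tuples
into `𝔥`. -/
def InM {G H : Type*} [AddCommGroup G] [AddCommGroup H]
    (n : ℕ) (F : (Fin n → G × H) → G × H) : Prop :=
  (∀ x : Fin n → G × H, (∀ i, (x i).2 = 0) → (F x).2 = 0) ∧
  (∀ x : Fin n → G × H, (∀ i, (x i).1 = 0) → (F x).1 = 0)

/-- The Chevalley-Eilenberg differential of a Lie algebra `(P, br)` with coefficients in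
the adjoint representation:
`(δf)(x₁,…,x_{m+2}) = Σᵢ (−1)^{i+1} [xᵢ, f(…,x̂ᵢ,…)] + Σ_{i<j} (−1)^{i+j} f([xᵢ,xⱼ],…,x̂ᵢ,…,x̂ⱼ,…)`
(written here with indices starting at `0`). -/
def ceDiff {P : Type*} [AddCommGroup P] (br : P → P → P)
    (m : ℕ) (F : (Fin (m+1) → P) → P) : (Fin (m+2) → P) → P :=
  fun x =>
    (∑ i : Fin (m+2), ((-1 : ℤ)^(i : ℕ)) • br (x i) (F (fun j => x (i.succAbove j)))) +
    ∑ i : Fin (m+2), ∑ j : Fin (m+2),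
      if (i : ℕ) < (j : ℕ) then
        ((-1 : ℤ)^((i : ℕ)+(j : ℕ))) •
          F (Fin.cons (br (x i) (x j))
              (fun l : Fin m =>
                x ⟨if (l : ℕ) < (i : ℕ) then (l : ℕ)
                   else if (l : ℕ) + 1 < (j : ℕ) then (l : ℕ) + 1 else (l : ℕ) + 2,
                   by split_ifs <;> omega⟩))
      else 0

/-!
For an antisymmetric bracket `b` with `π = b (z 0) (z 1)`, the Nijenhuis–Richardson bracket
`-[π, F]` is, shuffle by shuffle, the Chevalley–Eilenberg differential of `F`: the
`(m+1, 1)`-shuffles in `i_F π` are determined by the position `c` of the last argument and give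
the terms `±[x_c, F(…, x̂_c, …)]`, while the `(2, m)`-shuffles in `i_π F` are determined by the
pair `i < j` of positions of the first two arguments and give the terms `±F([x_i, x_j], …)`.
The bicrossed bracket maps `𝔤 × 𝔤` into `𝔤` and `𝔥 × 𝔥` into `𝔥`, so the Chevalley–Eilenberg
differential, hence `δ_MPL`, preserves `M^•`.
-/

open Finset Equiv

/-- The condition selecting the `(p, n - p)`-shuffles in `insNR`. -/
def Equiv.Perm.IsShuffle {n : ℕ} (p : ℕ) (σ : Perm (Fin n)) : Prop :=
  ∀ i j : Fin n, i < j → ((j : ℕ) < p ∨ p ≤ (i : ℕ)) → σ i < σ j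

instance {n p : ℕ} : DecidablePred (Equiv.Perm.IsShuffle (n := n) p) :=
  fun _ => by unfold Equiv.Perm.IsShuffle; infer_instance

theorem Equiv.Perm.isShuffle_permCongr_finCongr {n n' p : ℕ} (h : n = n') (σ : Perm (Fin n)) :
    (Equiv.permCongr (finCongr h) σ).IsShuffle p ↔ σ.IsShuffle p := by
  subst h; rfl

theorem Equiv.Perm.eq_of_strictMono_comp {α β : Type*} [Preorder α] [LinearOrder β]
    [WellFoundedLT β] {σ τ : Perm α} {e : β → α} (hσ : StrictMono (σ ∘ e))
    (hτ : StrictMono (τ ∘ e)) (h : ∀ a ∉ Set.range e, σ a = τ a) : σ = τ := by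
  have hcompl : σ '' (Set.range e)ᶜ = τ '' (Set.range e)ᶜ := Set.EqOn.image_eq h
  rw [Equiv.image_compl, Equiv.image_compl, compl_inj_iff, ← Set.range_comp,
    ← Set.range_comp, hσ.range_inj hτ] at hcompl
  ext a
  by_cases ha : a ∈ Set.range e
  · obtain ⟨b, rfl⟩ := ha
    exact congrFun hcompl b
  · exact h a ha

namespace Fin

variable {n : ℕ}

theorem isShuffle_iff_strictMono_castSucc {σ : Perm (Fin (n + 1))} :
    σ.IsShuffle n ↔ StrictMono (σ ∘ castSucc) := by
  refine ⟨fun h a b hab => h _ _ (castSucc_lt_castSucc_iff.2 hab) (.inl b.isLt), ?_⟩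
  intro h i j hij hij'
  obtain ⟨i, rfl⟩ := exists_castSucc_eq.2 (ne_last_of_lt hij)
  have hj : (j : ℕ) < n := hij'.resolve_right (by simp)
  obtain ⟨j, rfl⟩ := exists_castSucc_eq.2 (ne_of_val_ne (by simp; omega) : j ≠ last n)
  exact h (castSucc_lt_castSucc_iff.1 hij)

theorem cycleIcc_last_comp_castSucc (c : Fin (n + 1)) :
    cycleIcc c (last n) ∘ castSucc = c.succAbove := by
  simpa [succAbove_last] using cycleIcc_comp_succAbove c (last n) (le_last c)

theorem sign_cycleIcc_last (c : Fin (n + 1)) :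
    (Perm.sign (cycleIcc c (last n)) : ℤ) = (-1) ^ (n - c) := by
  simp [sign_cycleIcc_of_le (le_last c)]

theorem sum_isShuffle_last {M : Type*} [AddCommMonoid M] (t : Perm (Fin (n + 1)) → M) :
    ∑ σ with σ.IsShuffle n, t σ = ∑ c, t (cycleIcc c (last n)) := by
  have hmem : ∀ c : Fin (n + 1), (cycleIcc c (last n)).IsShuffle n := fun c => by
    rw [isShuffle_iff_strictMono_castSucc, cycleIcc_last_comp_castSucc]
    exact strictMono_succAbove c
  have hinv : ∀ σ : Perm (Fin (n + 1)), σ.IsShuffle n → cycleIcc (σ (last n)) (last n) = σ := by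
    intro σ hσ
    refine Perm.eq_of_strictMono_comp (isShuffle_iff_strictMono_castSucc.1 (hmem _))
      (isShuffle_iff_strictMono_castSucc.1 hσ) fun a ha => ?_
    obtain ⟨a, rfl⟩ | rfl := eq_castSucc_or_eq_last a
    · exact absurd ⟨a, rfl⟩ ha
    · exact cycleIcc_of_last (le_last _)
  refine sum_nbij' (fun σ => σ (last n)) (fun c => cycleIcc c (last n)) (by simp)
    (fun c _ => by simpa using hmem c) (fun σ hσ => hinv σ (by simpa using hσ))
    (fun c _ => cycleIcc_of_last (le_last c)) (fun σ hσ => ?_)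
  rw [hinv σ (by simpa using hσ)]

/-- The `(2, n)`-shuffle `0 ↦ i`, `1 ↦ j` (for `i < j`): `⟨j - 1, _⟩` is the position of `j`
once `i` is removed. -/
def pairShuffle (i j : Fin (n + 2)) : Perm (Fin (n + 2)) :=
  (Perm.decomposeFin.symm (0, (cycleRange ⟨(j : ℕ) - 1, by omega⟩).symm)).trans
    (cycleRange i).symm

theorem pairShuffle_zero (i j : Fin (n + 2)) : pairShuffle i j 0 = i := by
  simp [pairShuffle]

theorem pairShuffle_one {i j : Fin (n + 2)} (hij : i < j) : pairShuffle i j 1 = j := by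
  have := lt_def.1 hij
  rw [pairShuffle, Equiv.trans_apply, ← succ_zero_eq_one, Perm.decomposeFin_symm_apply_succ,
    cycleRange_symm_zero, swap_self, Equiv.refl_apply, cycleRange_symm_succ,
    succAbove_of_le_castSucc _ _ (by rw [le_def]; simp; omega)]
  exact Fin.ext (by simp; omega)

theorem pairShuffle_succ_succ (i j : Fin (n + 2)) (l : Fin n) :
    pairShuffle i j l.succ.succ =
      i.succAbove ((⟨(j : ℕ) - 1, by omega⟩ : Fin (n + 1)).succAbove l) := by
  simp [pairShuffle, Perm.decomposeFin_symm_apply_succ]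

theorem val_pairShuffle_succ_succ {i j : Fin (n + 2)} (hij : i < j) (l : Fin n) :
    (pairShuffle i j l.succ.succ : ℕ) =
      if (l : ℕ) < i then (l : ℕ) else if (l : ℕ) + 1 < j then (l : ℕ) + 1 else (l : ℕ) + 2 := by
  have := lt_def.1 hij
  rw [pairShuffle_succ_succ]
  simp only [succAbove, lt_def, val_castSucc]
  split_ifs <;> simp_all <;> omega

theorem sign_pairShuffle (i j : Fin (n + 2)) :
    (Perm.sign (pairShuffle i j) : ℤ) = (-1) ^ ((i : ℕ) + ((j : ℕ) - 1)) := by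
  rw [pairShuffle, Perm.sign_trans, Perm.sign_symm, sign_cycleRange,
    Perm.decomposeFin.symm_sign, Perm.sign_symm, sign_cycleRange]
  simp [pow_add]

theorem isShuffle_two_iff {σ : Perm (Fin (n + 2))} :
    σ.IsShuffle 2 ↔ σ 0 < σ 1 ∧ StrictMono fun l : Fin n => σ l.succ.succ := by
  refine ⟨fun h => ⟨h 0 1 (by simp) (.inl (by simp)),
    fun a b hab => h _ _ (by simpa using hab) (.inr (by simp))⟩, ?_⟩
  rintro ⟨h01, hmono⟩ i j hij (hj | hi)
  · have := lt_def.1 hij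
    obtain rfl : i = 0 := Fin.ext (by simp only [val_zero]; omega)
    obtain rfl : j = 1 := Fin.ext (by simp only [val_one]; omega)
    exact h01
  · have := lt_def.1 hij
    obtain ⟨i, rfl⟩ : ∃ l : Fin n, l.succ.succ = i := ⟨⟨i - 2, by omega⟩, Fin.ext (by simp; omega)⟩
    obtain ⟨j, rfl⟩ : ∃ l : Fin n, l.succ.succ = j := ⟨⟨j - 2, by omega⟩, Fin.ext (by simp; omega)⟩
    exact hmono (by simpa using hij)

theorem sum_isShuffle_two {M : Type*} [AddCommMonoid M] (t : Perm (Fin (n + 2)) → M) :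
    ∑ σ with σ.IsShuffle 2, t σ =
      ∑ p : Fin (n + 2) × Fin (n + 2) with p.1 < p.2, t (pairShuffle p.1 p.2) := by
  have hmono : ∀ i j : Fin (n + 2), StrictMono fun l : Fin n => pairShuffle i j l.succ.succ :=
    fun i j a b hab => by
      simpa only [pairShuffle_succ_succ, Function.comp_apply] using
        (strictMono_succAbove i).comp (strictMono_succAbove _) hab
  have hinv : ∀ σ : Perm (Fin (n + 2)), σ.IsShuffle 2 → pairShuffle (σ 0) (σ 1) = σ := by
    intro σ hσ
    rw [isShuffle_two_iff] at hσ
    refine Perm.eq_of_strictMono_comp (e := fun l : Fin n => l.succ.succ) (hmono _ _) hσ.2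
      fun a ha => ?_
    induction a using Fin.cases with
    | zero => exact pairShuffle_zero _ _
    | succ a =>
      induction a using Fin.cases with
      | zero => exact pairShuffle_one hσ.1
      | succ a => exact absurd ⟨a, rfl⟩ ha
  refine sum_nbij' (fun σ => (σ 0, σ 1)) (fun p => pairShuffle p.1 p.2) (fun σ hσ => ?_)
    (fun p hp => ?_) (fun σ hσ => hinv σ (by simpa using hσ)) (fun p hp => ?_)
    (fun σ hσ => by rw [hinv σ (by simpa using hσ)])
  · simp only [mem_filter, mem_univ, true_and] at hσ ⊢
    exact (isShuffle_two_iff.1 hσ).1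
  · simp only [mem_filter, mem_univ, true_and] at hp ⊢
    exact isShuffle_two_iff.2 ⟨by rwa [pairShuffle_zero, pairShuffle_one hp], hmono _ _⟩
  · simp only [mem_filter, mem_univ, true_and] at hp
    exact Prod.ext (pairShuffle_zero _ _) (pairShuffle_one hp)

end Fin

theorem neg_one_pow_eq_neg_neg_one_pow {a b : ℕ} (h : a % 2 = (b + 1) % 2) :
    (-1 : ℤ) ^ a = -(-1) ^ b := by
  rw [neg_one_pow_eq_pow_mod_two, h, ← neg_one_pow_eq_pow_mod_two, pow_succ, mul_neg_one]

section NijenhuisRichardson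

variable {P : Type*} [AddCommGroup P] {m : ℕ}

open Fin

theorem insNR_bracket_right (b : P → P → P) (F : (Fin (m + 1) → P) → P) (x : Fin (m + 2) → P) :
    insNR m 1 F (fun z => b (z 0) (z 1)) x =
      ∑ c : Fin (m + 2), (-1 : ℤ) ^ (m + 1 - c) • b (F (x ∘ c.succAbove)) (x c) := by
  rw [insNR, ← sum_filter]
  refine (sum_isShuffle_last _).trans (sum_congr rfl fun c _ => ?_)
  change (Perm.sign (cycleIcc c (last (m + 1))) : ℤ) •
    b (F (x ∘ cycleIcc c (last (m + 1)) ∘ castSucc)) (x (cycleIcc c (last (m + 1)) (last _))) = _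
  rw [cycleIcc_last_comp_castSucc, cycleIcc_of_last (le_last c), sign_cycleIcc_last]

theorem insNR_bracket_left (b : P → P → P) (F : (Fin (m + 1) → P) → P) (x : Fin (m + 2) → P) :
    insNR 1 m (fun z => b (z 0) (z 1)) F (x ∘ Fin.cast (by omega)) =
      ∑ p : Fin (m + 2) × Fin (m + 2) with p.1 < p.2, (-1 : ℤ) ^ ((p.1 : ℕ) + ((p.2 : ℕ) - 1)) •
        F (cons (b (x p.1) (x p.2)) fun l => x (pairShuffle p.1 p.2 l.succ.succ)) := by
  rw [insNR, ← sum_filter]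
  refine (sum_equiv (Equiv.permCongr (finCongr (by omega))) (t := univ.filter (·.IsShuffle 2))
    (g := fun σ : Perm (Fin (m + 2)) => (Perm.sign σ : ℤ) •
      F (cons (b (x (σ 0)) (x (σ 1))) fun l => x (σ l.succ.succ)))
    (fun σ => ?_) (fun σ _ => ?_)).trans
    ((sum_isShuffle_two _).trans (sum_congr rfl fun p hp => ?_))
  · simp only [mem_filter, mem_univ, true_and]
    exact (Perm.isShuffle_permCongr_finCongr _ σ).symm
  · rw [Perm.sign_permCongr]
    have hx : ∀ i j : Fin (1 + m + 1), (i : ℕ) = j →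
        x ⟨σ i, by omega⟩ = x (finCongr (by omega) (σ j)) := fun i j h => by rw [Fin.ext h]; rfl
    congr 2
    refine (cons_inj (α := fun _ => P)).2 ⟨congrArg₂ b (hx _ _ ?_) (hx _ _ ?_), funext fun l => ?_⟩
    · simp
    · simp
    · exact hx _ _ (by simp; omega)
  · simp only [mem_filter, mem_univ, true_and] at hp
    rw [sign_pairShuffle, pairShuffle_zero, pairShuffle_one hp]

theorem ceDiff_eq_neg_nrB (b : P → P → P) (hb : ∀ u v, b v u = -b u v)
    (F : (Fin (m + 1) → P) → P) (x : Fin (m + 2) → P) :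
    ceDiff b m F x = -nrB 1 m (fun z => b (z 0) (z 1)) F (x ∘ Fin.cast (by omega)) := by
  rw [nrB, insNR_bracket_left, insNR_bracket_right, ceDiff, neg_sub, one_mul, sub_eq_add_neg]
  congr 1
  · rw [smul_sum]
    refine sum_congr rfl fun c _ => ?_
    have := c.isLt
    rw [hb, smul_neg, ← neg_smul, smul_smul, ← pow_add]
    exact congrArg (· • _) (neg_one_pow_eq_neg_neg_one_pow (by omega)).symm
  · rw [sum_filter, ← univ_product_univ, sum_product, ← sum_neg_distrib]
    refine sum_congr rfl fun i _ => ?_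
    rw [← sum_neg_distrib]
    refine sum_congr rfl fun j _ => ?_
    dsimp only
    split_ifs with hij hij'
    · have := lt_def.1 hij'
      rw [← neg_smul]
      congr 1
      · exact neg_one_pow_eq_neg_neg_one_pow (by omega)
      · congr 2
        exact funext fun l => congrArg x (Fin.ext (val_pairShuffle_succ_succ hij' l).symm)
    · exact absurd (lt_def.2 hij) hij'
    · exact absurd (lt_def.1 ‹_›) hij
    · rw [neg_zero]

theorem ceDiff_mem {S : AddSubgroup P} {b : P → P → P} (hb : ∀ u ∈ S, ∀ v ∈ S, b u v ∈ S)
    {F : (Fin (m + 1) → P) → P} (hF : ∀ y, (∀ i, y i ∈ S) → F y ∈ S) {x : Fin (m + 2) → P}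
    (hx : ∀ i, x i ∈ S) : ceDiff b m F x ∈ S := by
  refine S.add_mem (S.sum_mem fun i _ => S.zsmul_mem (hb _ (hx i) _ (hF _ fun j => hx _)) _)
    (S.sum_mem fun i _ => S.sum_mem fun j _ => ?_)
  split_ifs
  · exact S.zsmul_mem (hF _ (forall_fin_succ.2 ⟨hb _ (hx i) _ (hx j), fun l => hx _⟩)) _
  · exact S.zero_mem

end NijenhuisRichardson

section MatchedPair

variable {k : Type*} [Field k] {A B C : Type*} [AddCommGroup A] [Module k A]
  [AddCommGroup B] [Module k B] [AddCommGroup C] [Module k C]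

theorem Bilin.map_zero_left_s12 {f : A → B → C} (hf : Bilin k f) (b : B) : f 0 b = 0 :=
  (AddMonoidHom.mk' (f · b) fun a a' => hf.1 a a' b).map_zero

theorem Bilin.map_zero_right_s12 {f : A → B → C} (hf : Bilin k f) (a : A) : f a 0 = 0 :=
  (AddMonoidHom.mk' (f a) (hf.2.2.1 a)).map_zero

theorem IsLieBracketP.swap {μ : A → A → A} (hμ : IsLieBracketP k μ) (x y : A) :
    μ y x = -μ x y := by
  have h := hμ.2.1 (x + y)
  rw [hμ.1.1, hμ.1.2.2.1, hμ.1.2.2.1, hμ.2.1, hμ.2.1, zero_add, add_zero] at h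
  exact eq_neg_of_add_eq_zero_right h

variable {G H : Type*} [AddCommGroup G] [Module k G] [AddCommGroup H] [Module k H]
  {μ : G → G → G} {ν : H → H → H} {ρ : G → H → H} {ψ : H → G → G}

theorem bicross_swap (hμ : IsLieBracketP k μ) (hν : IsLieBracketP k ν) (u v : G × H) :
    bicross μ ν ρ ψ v u = -bicross μ ν ρ ψ u v := by
  ext <;> simp only [bicross, Prod.fst_neg, Prod.snd_neg, hμ.swap u.1, hν.swap u.2] <;> abel

theorem bicross_mem_ker_fst (hμ : Bilin k μ) (hψ : Bilin k ψ) :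
    ∀ u ∈ (AddMonoidHom.fst G H).ker, ∀ v ∈ (AddMonoidHom.fst G H).ker,
      bicross μ ν ρ ψ u v ∈ (AddMonoidHom.fst G H).ker := by
  intro u (hu : u.1 = 0) v (hv : v.1 = 0)
  change (bicross μ ν ρ ψ u v).1 = 0
  simp [bicross, hu, hv, hμ.map_zero_left_s12, hψ.map_zero_right_s12]

theorem bicross_mem_ker_snd (hν : Bilin k ν) (hρ : Bilin k ρ) :
    ∀ u ∈ (AddMonoidHom.snd G H).ker, ∀ v ∈ (AddMonoidHom.snd G H).ker,
      bicross μ ν ρ ψ u v ∈ (AddMonoidHom.snd G H).ker := by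
  intro u (hu : u.2 = 0) v (hv : v.2 = 0)
  change (bicross μ ν ρ ψ u v).2 = 0
  simp [bicross, hu, hv, hν.map_zero_left_s12, hρ.map_zero_right_s12]

end MatchedPair

/-- For a matched pair of Lie algebras `(𝔤, 𝔥, ρ, ψ)`, the inclusions
`Φₙ : Cⁿ(𝔤,𝔥,ρ,ψ) ↪ Hom(Λⁿ(𝔤⊕𝔥), 𝔤⊕𝔥)` form a morphism of cochain complexes from the
matched-pair complex (with differential `δ_MPL F = −[π, F]_NR`) to the Chevalley-Eilenberg
complex of the bicrossed product `𝔤 ⋈ 𝔥` with adjoint coefficients: the differentials agree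
on `M^•`, and `δ_MPL` preserves `M^•`; hence there is an induced morphism
`H^•_MPL(𝔤,𝔥,ρ,ψ) → H^•_CE(𝔤 ⋈ 𝔥; 𝔤 ⋈ 𝔥)`. -/
theorem mpl_complex_maps_to_chevalley_eilenberg
    (k : Type*) [Field k] {G H : Type*}
    [AddCommGroup G] [Module k G] [AddCommGroup H] [Module k H]
    (μ : G → G → G) (ν : H → H → H) (ρ : G → H → H) (ψ : H → G → G)
    (hmp : IsMatchedPairP k μ ν ρ ψ) :
    ∀ (m : ℕ) (F : (Fin (m+1) → G × H) → G × H),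
      IsMultAlt k (m+1) F → InM (m+1) F →
      -- the Chevalley-Eilenberg differential of Φ(F) equals Φ(δ_MPL F) = −[π, F]_NR
      ((∀ x : Fin (m+2) → G × H,
          ceDiff (bicross μ ν ρ ψ) m F x =
            -(nrB 1 m (mcElt μ ν ρ ψ) F (fun i => x ⟨i, by omega⟩))) ∧
      -- δ_MPL F again lies in M^•, so Φ is a chain map
        InM (m+2) (fun x : Fin (m+2) → G × H =>
          -(nrB 1 m (mcElt μ ν ρ ψ) F (fun i => x ⟨i, by omega⟩)))) := by
  obtain ⟨hμ, hν, hρ, hψ, -, -⟩ := hmp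
  intro m F _ hF
  have hce : ∀ x : Fin (m + 2) → G × H, ceDiff (bicross μ ν ρ ψ) m F x =
      -(nrB 1 m (mcElt μ ν ρ ψ) F (fun i => x ⟨i, by omega⟩)) :=
    fun x => ceDiff_eq_neg_nrB _ (bicross_swap hμ hν) F x
  refine ⟨hce, fun x hx => ?_, fun x hx => ?_⟩
  · beta_reduce
    rw [← hce]
    exact ceDiff_mem (bicross_mem_ker_snd hν.1 hρ.1) hF.1 hx
  · beta_reduce
    rw [← hce]
    exact ceDiff_mem (bicross_mem_ker_fst hμ.1 hψ.1) hF.2 hx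
end
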